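/- (Soundness of the progressive/chain bound, appendix Case 3.) Let A, B, C be tables where A has key κ_A into finite domain V₁, B has keys λ_B into V₁ and μ_B into V₂, and C has key κ_C into V₂; let Q_A, Q_B, Q_C be filters. Define h : V₂ → ℕ by h(v₂) = ∑_{v₁ ∈ V₁} c_{A|Q_A,κ_A}(v₁) · c_{B|Q_B}(v₁, v₂) (the key-value counts of the intermediate join A ⋈ B). Let {bin_1, …, bin_k} be a partition of V₂, and suppose for each bin i we are given numbers U_i ≥ ∑_{v₂ ∈ bin_i} h(v₂) and M_i ≥ max_{v₂ ∈ bin_i} h(v₂). Then the three-table chain-join cardinality satisfies |{(a,b,c) : a ∈ A|Q_A, b ∈ B|Q_B, c ∈ C|Q_C, κ_A(a) = λ_B(b), μ_B(b) = κ_C(c)}| ≤ ∑_{i=1}^{k} min(U_i · V*_{C,i}, S_{C,i} · M_i), where S_{C,i} and V*_{C,i} are the total and most-frequent-value counts of c_{C|Q_C,κ_C} over bin_i. -/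

import Mathlib

/-! Grouping the triples of the chain join by the value `v₂` of the second join key writes its
cardinality as `∑ v₂, h v₂ * c v₂`, where `c` counts the key values of `C`. Splitting this sum
along the bins, the part over a bin is bounded both by `(∑ h) * max c` and by `(∑ c) * max h`. -/

namespace Multiset

variable {α β γ V V₁ V₂ : Type*}

theorem card_filter_product (s : Multiset α) (t : Multiset β) (p : α × β → Prop)
    [DecidablePred p] :
    card ((s ×ˢ t).filter p) = (s.map fun a => card (t.filter fun b => p (a, b))).sum := by
  simp [SProd.sprod, product, filter_bind, filter_map]

theorem filter_product_and_left (s : Multiset α) (t : Multiset β) (P : α → Prop)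
    (R : α × β → Prop) [DecidablePred P] [DecidablePred R] :
    (s ×ˢ t).filter (fun p => P p.1 ∧ R p) = (s.filter P ×ˢ t).filter R := by
  simp only [SProd.sprod, product, filter_bind, bind_filter]
  refine bind_congr fun a _ => ?_
  split_ifs with h <;> simp [filter_map, h]

theorem sum_map_comp_eq_sum_countP_mul [Fintype V] [DecidableEq V] (s : Multiset α) (κ : α → V)
    (F : V → ℕ) : (s.map fun x => F (κ x)).sum = ∑ v, s.countP (κ · = v) * F v := by
  induction s using Multiset.induction with
  | empty => simp
  | cons a s ih =>
    simp only [map_cons, sum_cons, ih, countP_cons, add_mul, Finset.sum_add_distrib, ite_mul,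
      one_mul, zero_mul, Finset.sum_ite_eq, Finset.mem_univ, if_true, add_comm]

theorem card_filter_product_eq_sum_countP_mul [Fintype V] [DecidableEq V]
    (s : Multiset α) (t : Multiset β) (f : α → V) (g : β → V) :
    card ((s ×ˢ t).filter fun p => f p.1 = g p.2) =
      ∑ v, s.countP (f · = v) * t.countP (g · = v) := by
  rw [card_filter_product, ← sum_map_comp_eq_sum_countP_mul]
  refine congrArg sum (map_congr rfl fun a _ => ?_)
  simp only [countP_eq_card_filter, eq_comm]

theorem card_filter_chain_join_eq_sum [Fintype V₁] [DecidableEq V₁] [Fintype V₂]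
    [DecidableEq V₂] (A : Multiset α) (B : Multiset β) (C : Multiset γ)
    (κA : α → V₁) (lB : β → V₁) (mB : β → V₂) (κC : γ → V₂) :
    card ((A ×ˢ B ×ˢ C).filter fun p => κA p.1 = lB p.2.1 ∧ mB p.2.1 = κC p.2.2) =
      ∑ v₂, (∑ v₁, A.countP (κA · = v₁) * B.countP (fun b => lB b = v₁ ∧ mB b = v₂)) *
        C.countP (κC · = v₂) := by
  have card_join_BC : ∀ a, card ((B ×ˢ C).filter fun q => κA a = lB q.1 ∧ mB q.1 = κC q.2) =
      ∑ v₂, B.countP (fun b => lB b = κA a ∧ mB b = v₂) * C.countP (κC · = v₂) := by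
    intro a
    rw [filter_product_and_left (P := fun b => κA a = lB b) (R := fun q => mB q.1 = κC q.2),
      card_filter_product_eq_sum_countP_mul]
    simp only [countP_filter, eq_comm, and_comm]
  rw [card_filter_product, map_congr rfl fun a _ => card_join_BC a,
    sum_map_comp_eq_sum_countP_mul A κA fun v₁ =>
      ∑ v₂, B.countP (fun b => lB b = v₁ ∧ mB b = v₂) * C.countP (κC · = v₂)]
  simp only [Finset.mul_sum, Finset.sum_mul, mul_assoc]
  exact Finset.sum_comm

end Multiset

theorem Finset.sum_univ_eq_sum_sum_of_partition {ι V M : Type*} [Fintype ι] [Fintype V]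
    [AddCommMonoid M] (bins : ι → Finset V) (hdisj : Pairwise (Function.onFun Disjoint bins))
    (hcover : ∀ v, ∃ i, v ∈ bins i) (f : V → M) :
    ∑ v, f v = ∑ i, ∑ v ∈ bins i, f v := by
  rw [← Finset.sum_disjiUnion univ bins fun i _ j _ hij => hdisj hij]
  refine Finset.sum_congr (Finset.eq_univ_of_forall fun v => ?_).symm fun _ _ => rfl
  obtain ⟨i, hi⟩ := hcover v
  exact Finset.mem_disjiUnion.2 ⟨i, Finset.mem_univ i, hi⟩

theorem Finset.sum_mul_le_sum_mul_sup {V : Type*} (s : Finset V) (f g : V → ℕ) :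
    ∑ v ∈ s, f v * g v ≤ (∑ v ∈ s, f v) * s.sup g := by
  rw [Finset.sum_mul]
  exact Finset.sum_le_sum fun v hv => Nat.mul_le_mul_left _ (Finset.le_sup hv)

/-- Soundness of the progressive/chain bound, appendix Case
3. If h gives the per-value key counts of the intermediate join A ⋈ B on B's
second key, and for each bin of a partition of V₂ we are given upper bounds U_i
on the bin's total intermediate count and M_i on its most-frequent-value
intermediate count, then the three-table chain-join cardinality is at most
∑ᵢ min(Uᵢ·V*_{C,i}, S_{C,i}·Mᵢ). -/
theorem chain_join_progressive_bound
    {R_A R_B R_C V₁ V₂ : Type*}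
    [Fintype V₁] [DecidableEq V₁] [Fintype V₂] [DecidableEq V₂]
    (A : Multiset R_A) (B : Multiset R_B) (C : Multiset R_C)
    (κA : R_A → V₁) (lB : R_B → V₁) (mB : R_B → V₂) (κC : R_C → V₂)
    (QA : R_A → Prop) (QB : R_B → Prop) (QC : R_C → Prop)
    [DecidablePred QA] [DecidablePred QB] [DecidablePred QC]
    (h : V₂ → ℕ)
    (hdef : ∀ v₂ : V₂, h v₂ =
      ∑ v₁ : V₁,
        ((A.filter QA).countP (fun a => κA a = v₁)) *
        ((B.filter QB).countP (fun b => lB b = v₁ ∧ mB b = v₂)))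
    (k : ℕ) (bins : Fin k → Finset V₂)
    (hdisj : ∀ i j, i ≠ j → Disjoint (bins i) (bins j))
    (hcover : ∀ v : V₂, ∃ i, v ∈ bins i)
    (U M : Fin k → ℕ)
    (hU : ∀ i, ∑ v ∈ bins i, h v ≤ U i)
    (hM : ∀ i, (bins i).sup h ≤ M i) :
    Multiset.card
      (((A.filter QA) ×ˢ (B.filter QB) ×ˢ (C.filter QC)).filter
        (fun p => κA p.1 = lB p.2.1 ∧ mB p.2.1 = κC p.2.2)) ≤
      ∑ i : Fin k,
        min
          (U i * ((bins i).sup (fun v => (C.filter QC).countP (fun c => κC c = v))))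
          ((∑ v ∈ bins i, (C.filter QC).countP (fun c => κC c = v)) * M i) := by
  set c : V₂ → ℕ := fun v => (C.filter QC).countP (κC · = v)
  rw [Multiset.card_filter_chain_join_eq_sum]
  simp only [← hdef]
  rw [Finset.sum_univ_eq_sum_sum_of_partition bins (fun i j => hdisj i j) hcover]
  refine Finset.sum_le_sum fun i _ => le_min ?_ ?_
  · calc ∑ v ∈ bins i, h v * c v ≤ (∑ v ∈ bins i, h v) * (bins i).sup c :=
          Finset.sum_mul_le_sum_mul_sup _ _ _
      _ ≤ U i * (bins i).sup c := Nat.mul_le_mul_right _ (hU i)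
  · calc ∑ v ∈ bins i, h v * c v = ∑ v ∈ bins i, c v * h v := by simp only [mul_comm]
      _ ≤ (∑ v ∈ bins i, c v) * (bins i).sup h := Finset.sum_mul_le_sum_mul_sup _ _ _
      _ ≤ (∑ v ∈ bins i, c v) * M i := Nat.mul_le_mul_left _ (hM i)
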